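/- arXiv:2403.02057 — 9 statements merged into one kernel-verified Lean document; each statement's English description precedes it below -/
import Mathlib

section
/- Quantitative core of the fixed-point search theorem. Let T_L denote the Chebyshev polynomial of the first kind of degree L (so T_L(cos θ) = cos(Lθ) and T_L(cosh t) = cosh(Lt)). Fix w ∈ (0,1) and δ ∈ (0,1), let l be a positive integer with l ≥ ln(2/δ)/(2w), and set L = 2l+1 and γ = √(1−w²). Then for every real λ with w ≤ λ ≤ 1 one has T_L(√(1−λ²)/γ)² ≤ δ² · T_L(1/γ)², and consequently √(1 − T_L(√(1−λ²)/γ)² / T_L(1/γ)²) ≥ √(1−δ²). -/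
open Real

/-- Chebyshev T at `cosh`. -/
lemma T_real_cosh (n : ℤ) (t : ℝ) :
    (Polynomial.Chebyshev.T ℝ n).eval (Real.cosh t) = Real.cosh (n * t) := by
  have h := Polynomial.Chebyshev.T_complex_cos ((t : ℂ) * Complex.I) n
  rw [Complex.cos_mul_I] at h
  have he : ((n : ℂ)) * ((t : ℂ) * Complex.I) = ((n * t : ℝ) : ℂ) * Complex.I := by
    push_cast; ring
  rw [he, Complex.cos_mul_I] at h
  have h2 := Polynomial.Chebyshev.complex_ofReal_eval_T (Real.cosh t) n
  rw [Complex.ofReal_cosh, h, ← Complex.ofReal_cosh] at h2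
  exact_mod_cast h2

/-- surjectivity of cosh onto `[1, ∞)`. -/
lemma exists_cosh_eq {x : ℝ} (hx : 1 ≤ x) : ∃ t : ℝ, 0 ≤ t ∧ Real.cosh t = x := by
  set s := Real.sqrt (x ^ 2 - 1) with hs
  have hs2 : s ^ 2 = x ^ 2 - 1 := Real.sq_sqrt (by nlinarith)
  have hsnn : 0 ≤ s := Real.sqrt_nonneg _
  have hxs : 1 ≤ x + s := by linarith
  have hxspos : 0 < x + s := by linarith
  refine ⟨Real.log (x + s), Real.log_nonneg hxs, ?_⟩
  rw [Real.cosh_eq, Real.exp_log hxspos, Real.exp_neg, Real.exp_log hxspos]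
  have hinv : (x + s)⁻¹ = x - s :=
    inv_eq_of_mul_eq_one_right (by nlinarith)
  rw [hinv]; ring

/-- `sinh x ≤ x * cosh x` for `x ≥ 0`. -/
lemma sinh_le_mul_cosh {x : ℝ} (hx : 0 ≤ x) : Real.sinh x ≤ x * Real.cosh x := by
  have hmono : MonotoneOn (fun y : ℝ => y * Real.cosh y - Real.sinh y) (Set.Ici 0) := by
    apply monotoneOn_of_deriv_nonneg (convex_Ici 0)
    · fun_prop
    · fun_prop
    · intro y hy
      have hd : HasDerivAt (fun y : ℝ => y * Real.cosh y - Real.sinh y)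
          (1 * Real.cosh y + y * Real.sinh y - Real.cosh y) y :=
        ((hasDerivAt_id y).mul (Real.hasDerivAt_cosh y)).sub (Real.hasDerivAt_sinh y)
      rw [hd.deriv]
      have hy0 : 0 < y := by simpa using hy
      have : 0 ≤ Real.sinh y := Real.sinh_nonneg_iff.2 hy0.le
      nlinarith
  have := hmono (Set.self_mem_Ici) (Set.mem_Ici.2 hx) hx
  simpa using this

/-- Quantitative core of the fixed-point search theorem. With `L = 2l+1` and
`γ = √(1−w²)`, if `l ≥ ln(2/δ)/(2w)` then for every `λ ∈ [w, 1]`,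
`T_L(√(1−λ²)/γ)² ≤ δ²·T_L(1/γ)²` and hence
`√(1 − T_L(√(1−λ²)/γ)²/T_L(1/γ)²) ≥ √(1−δ²)`. -/
theorem fixed_point_search_quantitative_core
    (w δ : ℝ) (hw : w ∈ Set.Ioo (0 : ℝ) 1) (hδ : δ ∈ Set.Ioo (0 : ℝ) 1)
    (l : ℕ) (hl : 0 < l) (hlge : (l : ℝ) ≥ Real.log (2 / δ) / (2 * w)) :
    ∀ lam : ℝ, w ≤ lam → lam ≤ 1 →
      (Polynomial.Chebyshev.T ℝ (2 * l + 1)).eval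
          (Real.sqrt (1 - lam ^ 2) / Real.sqrt (1 - w ^ 2)) ^ 2
        ≤ δ ^ 2 * (Polynomial.Chebyshev.T ℝ (2 * l + 1)).eval
            (1 / Real.sqrt (1 - w ^ 2)) ^ 2 ∧
      Real.sqrt (1 -
          (Polynomial.Chebyshev.T ℝ (2 * l + 1)).eval
              (Real.sqrt (1 - lam ^ 2) / Real.sqrt (1 - w ^ 2)) ^ 2 /
            (Polynomial.Chebyshev.T ℝ (2 * l + 1)).eval
              (1 / Real.sqrt (1 - w ^ 2)) ^ 2)
        ≥ Real.sqrt (1 - δ ^ 2) := by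
  obtain ⟨hw0, hw1⟩ := hw
  obtain ⟨hδ0, hδ1⟩ := hδ
  intro lam hlaml hlamu
  set γ := Real.sqrt (1 - w ^ 2) with hγdef
  have hγsqpos : (0 : ℝ) < 1 - w ^ 2 := by nlinarith
  have hγpos : 0 < γ := Real.sqrt_pos.2 hγsqpos
  have hγsq : γ ^ 2 = 1 - w ^ 2 := Real.sq_sqrt hγsqpos.le
  have hγle1 : γ ≤ 1 := Real.sqrt_le_one.2 (by nlinarith)
  have hinvγ : 1 ≤ 1 / γ := by rw [le_div_iff₀ hγpos]; linarith
  obtain ⟨t, ht0, hcosh⟩ := exists_cosh_eq hinvγ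
  -- cosh w ≤ 1/γ, hence w ≤ t
  have hsinh : Real.sinh w ≤ w * Real.cosh w := sinh_le_mul_cosh hw0.le
  have hcoshw : Real.cosh w ≤ 1 / γ := by
    have hcw : 0 < Real.cosh w := Real.cosh_pos w
    have hsq : Real.cosh w ^ 2 * (1 - w ^ 2) ≤ 1 := by
      have h1 : Real.cosh w ^ 2 - Real.sinh w ^ 2 = 1 := Real.cosh_sq_sub_sinh_sq w
      have hsnn : 0 ≤ Real.sinh w := Real.sinh_nonneg_iff.2 hw0.le
      nlinarith
    rw [le_div_iff₀ hγpos]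
    nlinarith [Real.sq_sqrt hγsqpos.le]
  have hwt : w ≤ t := by
    have : Real.cosh w ≤ Real.cosh t := by rw [hcosh]; exact hcoshw
    have habs : |w| ≤ |t| := Real.cosh_le_cosh.1 this
    calc w ≤ |w| := le_abs_self w
      _ ≤ |t| := habs
      _ = t := abs_of_nonneg ht0
  -- denominator
  have hTden : (Polynomial.Chebyshev.T ℝ (2 * l + 1)).eval (1 / γ)
      = Real.cosh ((2 * (l : ℝ) + 1) * t) := by
    rw [← hcosh, T_real_cosh]
    norm_num
  have hNt : Real.log (2 / δ) ≤ (2 * (l : ℝ) + 1) * t := by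
    have hlw : Real.log (2 / δ) ≤ 2 * w * (l : ℝ) := by
      rw [ge_iff_le, div_le_iff₀ (by positivity)] at hlge
      linarith
    have hlpos : (0 : ℝ) < l := by exact_mod_cast hl
    nlinarith
  have hδT : 1 ≤ δ * (Polynomial.Chebyshev.T ℝ (2 * l + 1)).eval (1 / γ) := by
    rw [hTden]
    have hexp : 2 / δ ≤ Real.exp ((2 * (l : ℝ) + 1) * t) := by
      rw [← Real.exp_log (show (0:ℝ) < 2 / δ by positivity)]
      exact Real.exp_le_exp.2 hNt
    have hch : Real.exp ((2 * (l : ℝ) + 1) * t) / 2 ≤ Real.cosh ((2 * (l : ℝ) + 1) * t) := by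
      rw [Real.cosh_eq]
      have := (Real.exp_pos (-((2 * (l : ℝ) + 1) * t))).le
      linarith
    calc (1:ℝ) = δ * ((2 / δ) / 2) := by field_simp
      _ ≤ δ * (Real.exp ((2 * (l : ℝ) + 1) * t) / 2) := by
          apply mul_le_mul_of_nonneg_left _ hδ0.le
          linarith
      _ ≤ δ * Real.cosh ((2 * (l : ℝ) + 1) * t) := mul_le_mul_of_nonneg_left hch hδ0.le
  have hTdenpos : 0 < (Polynomial.Chebyshev.T ℝ (2 * l + 1)).eval (1 / γ) := by
    rw [hTden]; exact Real.cosh_pos _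
  -- numerator
  set x := Real.sqrt (1 - lam ^ 2) / γ with hxdef
  have hx0 : 0 ≤ x := by positivity
  have hx1 : x ≤ 1 := by
    rw [hxdef, div_le_one hγpos, hγdef]
    exact Real.sqrt_le_sqrt (by nlinarith)
  have hTnum : (Polynomial.Chebyshev.T ℝ (2 * l + 1)).eval x ^ 2 ≤ 1 := by
    have hx := Real.cos_arccos (by linarith : -1 ≤ x) hx1
    rw [← hx, Polynomial.Chebyshev.T_real_cos]
    exact Real.cos_sq_le_one _
  set A := (Polynomial.Chebyshev.T ℝ (2 * l + 1)).eval x with hAdef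
  set B := (Polynomial.Chebyshev.T ℝ (2 * l + 1)).eval (1 / γ) with hBdef
  clear_value A B
  clear hAdef hBdef
  have hfirst : A ^ 2 ≤ δ ^ 2 * B ^ 2 := by
    have h1 : (1:ℝ) * 1 ≤ (δ * B) * (δ * B) :=
      mul_le_mul hδT hδT zero_le_one (mul_nonneg hδ0.le hTdenpos.le)
    calc A ^ 2 ≤ 1 := hTnum
      _ = 1 * 1 := by ring
      _ ≤ (δ * B) * (δ * B) := h1
      _ = δ ^ 2 * B ^ 2 := by ring
  refine ⟨hfirst, ?_⟩
  apply Real.sqrt_le_sqrt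
  have hd2 : 0 < B ^ 2 := by positivity
  have : A ^ 2 / B ^ 2 ≤ δ ^ 2 := by
    rw [div_le_iff₀ hd2]; linarith [hfirst]
  linarith
end

section
/- Failure amplitude as a quasi-Chebyshev polynomial. Let N be a positive integer, M a subset of Fin N, Π_M the orthogonal projection in ℂ^N onto the span of the standard basis vectors indexed by M, and Π_M^⊥ = I − Π_M. Let |ψ₀⟩ be a unit vector in ℂ^N and set x = ‖Π_M^⊥|ψ₀⟩‖. For real angles α, β define G(α,β) = S₀(β)·S_M(α) with S₀(β) = I − (1 − e^{iβ})|ψ₀⟩⟨ψ₀| and S_M(α) = I − (1 − e^{iα})Π_M. Let l be a positive integer, let (α_k, β_k) for k = 1,…,l be arbitrary real angles, and set |ψ_l⟩ = G(α_l,β_l)⋯G(α_1,β_1)|ψ₀⟩. Define the angles φ_{2k−1} = π − α_k and φ_{2k} = β_k + π for k = 1,…,l, set L = 2l+1, and define a_n : ℝ → ℂ by a_0(x) = 1, a_1(x) = x, and a_{n+1}(x) = x·(1 + e^{−iφ_n})·a_n(x) − e^{−iφ_n}·a_{n−1}(x) for n = 1,…,2l. Then ‖Π_M^⊥|ψ_l⟩‖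 = |a_L(x)|. -/
open Real

/-- Orthogonal projection `Π_M` onto the span of the standard basis vectors of
`ℂ^N` indexed by `M`. -/
noncomputable def coordProj {N : ℕ} (M : Finset (Fin N)) :
    EuclideanSpace ℂ (Fin N) →ₗ[ℂ] EuclideanSpace ℂ (Fin N) where
  toFun v := WithLp.toLp 2 (fun i => if i ∈ M then v i else 0)
  map_add' x y := by
    ext i
    by_cases h : i ∈ M <;> simp [h, PiLp.add_apply]
  map_smul' c x := by
    ext i
    by_cases h : i ∈ M <;> simp [h, PiLp.smul_apply]

/-- The rank-one orthogonal projection `|ψ⟩⟨ψ|` onto a unit vector `ψ`. -/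
noncomputable def outerSelf {N : ℕ} (ψ : EuclideanSpace ℂ (Fin N)) :
    EuclideanSpace ℂ (Fin N) →ₗ[ℂ] EuclideanSpace ℂ (Fin N) where
  toFun v := (inner ℂ ψ v : ℂ) • ψ
  map_add' x y := by simp [inner_add_right, add_smul]
  map_smul' c x := by simp [inner_smul_right, mul_smul]

/-- `S₀(β) = I − (1 − e^{iβ})|ψ₀⟩⟨ψ₀|`. -/
noncomputable def S0 {N : ℕ} (ψ₀ : EuclideanSpace ℂ (Fin N)) (β : ℝ) :
    EuclideanSpace ℂ (Fin N) →ₗ[ℂ] EuclideanSpace ℂ (Fin N) :=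
  LinearMap.id - (1 - Complex.exp (Complex.I * (β : ℂ))) • outerSelf ψ₀

/-- `S_M(α) = I − (1 − e^{iα})Π_M`. -/
noncomputable def SM {N : ℕ} (M : Finset (Fin N)) (α : ℝ) :
    EuclideanSpace ℂ (Fin N) →ₗ[ℂ] EuclideanSpace ℂ (Fin N) :=
  LinearMap.id - (1 - Complex.exp (Complex.I * (α : ℂ))) • coordProj M

/-- The generalized Grover iteration `G(α,β) = S₀(β)·S_M(α)`. -/
noncomputable def Gop {N : ℕ} (M : Finset (Fin N)) (ψ₀ : EuclideanSpace ℂ (Fin N))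
    (α β : ℝ) : EuclideanSpace ℂ (Fin N) →ₗ[ℂ] EuclideanSpace ℂ (Fin N) :=
  S0 ψ₀ β ∘ₗ SM M α

/-!
Write `b = Π_M^⊥ ψ₀`, so that `‖b‖ = x`. Both reflections preserve the plane spanned by `Π_M ψ₀`
and `b`, and up to a unimodular phase a state `v` of the iteration is described by its overlap
`⟪ψ₀, v⟫` and its failure coefficient `q`, `Π_M^⊥ v = q • b`. One Grover step acts on this pair
by a linear map (`groverStep`), and with `φ_{2k+1} = π - α_{k+1}`, `φ_{2k+2} = β_{k+1} + π` two
steps of the quasi-Chebyshev recursion are exactly one `groverStep`, with `a_{2k}` the overlap and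
`a_{2k+1} = x q`. Hence `‖Π_M^⊥ ψ_l‖ = x |q_l| = |a_{2l+1}(x)|`.
-/

open Complex
open scoped InnerProductSpace

section SymmetricProjection

variable {E : Type*} [NormedAddCommGroup E] [InnerProductSpace ℂ E] {P : E →ₗ[ℂ] E}

theorem IsIdempotentElem.sub_smul_apply_sub_apply (hP : IsIdempotentElem P) (z : ℂ) (v : E) :
    (v - z • P v) - P (v - z • P v) = v - P v := by
  have hPP : P (P v) = P v := by rw [← Module.End.mul_apply, hP.eq]
  rw [map_sub, map_smul, hPP]
  abel

theorem LinearMap.IsSymmetricProjection.inner_sub_apply_right (hP : P.IsSymmetricProjection)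
    (u v : E) : ⟪u, v - P v⟫_ℂ = ⟪u - P u, v - P v⟫_ℂ := by
  have hP_perp : ⟪P u, v - P v⟫_ℂ = 0 := by
    rw [hP.isSymmetric, map_sub, ← Module.End.mul_apply, hP.isIdempotentElem.eq, sub_self,
      inner_zero_right]
  rw [inner_sub_left, hP_perp, sub_zero]

theorem inner_sub_smul_inner_smul_self {ψ : E} (hψ : ‖ψ‖ = 1) (z : ℂ) (w : E) :
    ⟪ψ, w - (z * ⟪ψ, w⟫_ℂ) • ψ⟫_ℂ = (1 - z) * ⟪ψ, w⟫_ℂ := by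
  rw [inner_sub_right, inner_smul_right, inner_self_eq_norm_sq_to_K, hψ]
  push_cast
  ring

end SymmetricProjection

theorem coordProj_isSymmetricProjection {N : ℕ} (M : Finset (Fin N)) :
    (coordProj M).IsSymmetricProjection where
  isIdempotentElem := LinearMap.ext fun v => by
    ext i
    by_cases h : i ∈ M <;> simp [coordProj, h]
  isSymmetric v w := by
    simp only [PiLp.inner_apply]
    refine Finset.sum_congr rfl fun i _ => ?_
    by_cases h : i ∈ M <;> simp [coordProj, h]

/-- The pair (overlap with `ψ₀`, failure coefficient) after one step `G(α, β)`, divided by the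
global phase `e^{iβ}`; `x = ‖Π_M^⊥ ψ₀‖`. -/
noncomputable def groverStep (x α β : ℝ) (p : ℂ × ℂ) : ℂ × ℂ :=
  let s := cexp (I * α) * p.1 + (1 - cexp (I * α)) * x ^ 2 * p.2
  (s, cexp (-(I * β)) * p.2 + (1 - cexp (-(I * β))) * s)

noncomputable def groverCoeffs (x : ℝ) (α β : ℕ → ℝ) : ℕ → ℂ × ℂ
  | 0 => (1, 1)
  | k + 1 => groverStep x (α (k + 1)) (β (k + 1)) (groverCoeffs x α β k)

theorem Gop_apply_of_coeffs {N : ℕ} {M : Finset (Fin N)} {ψ₀ : EuclideanSpace ℂ (Fin N)}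
    (hψ₀ : ‖ψ₀‖ = 1) {x : ℝ} (hx : ‖ψ₀ - coordProj M ψ₀‖ = x) (α β : ℝ)
    {v : EuclideanSpace ℂ (Fin N)} {u : ℂ} {p : ℂ × ℂ} (hc : ⟪ψ₀, v⟫_ℂ = u * p.1)
    (hq : v - coordProj M v = (u * p.2) • (ψ₀ - coordProj M ψ₀)) :
    ⟪ψ₀, Gop M ψ₀ α β v⟫_ℂ = u * cexp (I * β) * (groverStep x α β p).1 ∧
      Gop M ψ₀ α β v - coordProj M (Gop M ψ₀ α β v) =
        (u * cexp (I * β) * (groverStep x α β p).2) • (ψ₀ - coordProj M ψ₀) := by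
  have hP := coordProj_isSymmetricProjection M
  set w := SM M α v
  have hw : w = v - (1 - cexp (I * α)) • coordProj M v := rfl
  have hw_sub : w - coordProj M w = v - coordProj M v :=
    hw ▸ hP.isIdempotentElem.sub_smul_apply_sub_apply _ v
  have hψw : ⟪ψ₀, w⟫_ℂ = u * (groverStep x α β p).1 := by
    have hψP : ⟪ψ₀, coordProj M v⟫_ℂ = ⟪ψ₀, v⟫_ℂ - ⟪ψ₀, v - coordProj M v⟫_ℂ := by
      rw [inner_sub_right, sub_sub_cancel]
    rw [hw, inner_sub_right, inner_smul_right, hψP, hP.inner_sub_apply_right, hq,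
      inner_smul_right, inner_self_eq_norm_sq_to_K, hx, hc]
    simp only [groverStep, RCLike.ofReal_eq_complex_ofReal]
    ring
  have hG : Gop M ψ₀ α β v = w - ((1 - cexp (I * β)) * ⟪ψ₀, w⟫_ℂ) • ψ₀ := by
    rw [mul_smul]
    rfl
  have hβ : cexp (I * β) * cexp (-(I * β)) = 1 := by
    rw [← Complex.exp_add, add_neg_cancel, Complex.exp_zero]
  constructor
  · rw [hG, inner_sub_smul_inner_smul_self hψ₀, hψw]
    ring
  · rw [hG, map_sub, map_smul, sub_sub_sub_comm, ← smul_sub, hw_sub, hq, hψw, ← sub_smul]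
    congr 1
    simp only [groverStep]
    linear_combination (u * (cexp (I * α) * p.1 + (1 - cexp (I * α)) * (x : ℂ) ^ 2 * p.2)
      - u * p.2) * hβ

theorem exists_phase_grover_iterate {N : ℕ} {M : Finset (Fin N)} {ψ₀ : EuclideanSpace ℂ (Fin N)}
    (hψ₀ : ‖ψ₀‖ = 1) {l : ℕ} {α β : ℕ → ℝ} {ψ : ℕ → EuclideanSpace ℂ (Fin N)}
    (hψ0 : ψ 0 = ψ₀) (hψstep : ∀ k < l, ψ (k + 1) = Gop M ψ₀ (α (k + 1)) (β (k + 1)) (ψ k))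
    {x : ℝ} (hx : ‖ψ₀ - coordProj M ψ₀‖ = x) :
    ∀ k ≤ l, ∃ u : ℂ, ‖u‖ = 1 ∧ ⟪ψ₀, ψ k⟫_ℂ = u * (groverCoeffs x α β k).1 ∧
      ψ k - coordProj M (ψ k) = (u * (groverCoeffs x α β k).2) • (ψ₀ - coordProj M ψ₀) := by
  intro k hk
  induction k with
  | zero =>
    refine ⟨1, norm_one, ?_, ?_⟩ <;>
      simp [groverCoeffs, hψ0, inner_self_eq_norm_sq_to_K, hψ₀]
  | succ k ih =>
    obtain ⟨u, hu, hc, hq⟩ := ih (by omega)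
    obtain ⟨hc', hq'⟩ := Gop_apply_of_coeffs hψ₀ hx (α (k + 1)) (β (k + 1)) hc hq
    refine ⟨u * cexp (I * β (k + 1)), ?_, ?_, ?_⟩
    · rw [norm_mul, hu, Complex.norm_exp_I_mul_ofReal, one_mul]
    · rw [hψstep k (by omega), hc']
      rfl
    · rw [hψstep k (by omega), hq']
      rfl

theorem quasiChebyshev_two_steps {a : ℕ → ℂ} {φ : ℕ → ℝ} {x α β : ℝ} {n : ℕ} {p : ℂ × ℂ}
    (hφodd : φ (n + 1) = π - α) (hφeven : φ (n + 2) = β + π)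
    (hrec₁ : a (n + 1 + 1) = x * (1 + cexp (-(I * φ (n + 1)))) * a (n + 1)
      - cexp (-(I * φ (n + 1))) * a (n + 1 - 1))
    (hrec₂ : a (n + 2 + 1) = x * (1 + cexp (-(I * φ (n + 2)))) * a (n + 2)
      - cexp (-(I * φ (n + 2))) * a (n + 2 - 1))
    (h₀ : a n = p.1) (h₁ : a (n + 1) = x * p.2) :
    a (n + 2) = (groverStep x α β p).1 ∧ a (n + 3) = x * (groverStep x α β p).2 := by
  have hflip (t : ℝ) : cexp (-(I * ↑(t + π))) = -cexp (-(I * t)) := by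
    rw [← exp_sub_pi_mul_I]
    push_cast
    ring_nf
  have hα : cexp (-(I * φ (n + 1))) = -cexp (I * α) := by
    rw [hφodd, sub_eq_neg_add, hflip]
    push_cast
    ring_nf
  have hβ : cexp (-(I * φ (n + 2))) = -cexp (-(I * β)) := by rw [hφeven, hflip]
  have ha₂ : a (n + 2) = (groverStep x α β p).1 := by
    rw [hrec₁, hα, Nat.add_sub_cancel, h₀, h₁, groverStep]
    ring
  refine ⟨ha₂, ?_⟩
  rw [hrec₂, hβ, show n + 2 - 1 = n + 1 by omega, ha₂, h₁, groverStep]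
  ring

theorem quasiChebyshev_eq_groverCoeffs {a : ℕ → ℂ} {φ : ℕ → ℝ} {x : ℝ} {α β : ℕ → ℝ} {l : ℕ}
    (hφodd : ∀ k : ℕ, 1 ≤ k → k ≤ l → φ (2 * k - 1) = π - α k)
    (hφeven : ∀ k : ℕ, 1 ≤ k → k ≤ l → φ (2 * k) = β k + π)
    (ha0 : a 0 = 1) (ha1 : a 1 = x)
    (harec : ∀ n : ℕ, 1 ≤ n → n ≤ 2 * l →
      a (n + 1) = x * (1 + cexp (-(I * φ n))) * a n - cexp (-(I * φ n)) * a (n - 1)) :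
    ∀ k ≤ l, a (2 * k) = (groverCoeffs x α β k).1 ∧
      a (2 * k + 1) = x * (groverCoeffs x α β k).2 := by
  intro k hk
  induction k with
  | zero => simp [groverCoeffs, ha0, ha1]
  | succ k ih =>
    obtain ⟨h₀, h₁⟩ := ih (by omega)
    have hφ₁ : φ (2 * k + 1) = π - α (k + 1) := by
      rw [show 2 * k + 1 = 2 * (k + 1) - 1 by omega, hφodd (k + 1) (by omega) hk]
    have hφ₂ : φ (2 * k + 2) = β (k + 1) + π := hφeven (k + 1) (by omega) hk
    exact quasiChebyshev_two_steps hφ₁ hφ₂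
      (harec (2 * k + 1) (by omega) (by omega)) (harec (2 * k + 2) (by omega) (by omega)) h₀ h₁

theorem failure_amplitude_eq_quasi_chebyshev_general
    (N : ℕ) (M : Finset (Fin N))
    (ψ₀ : EuclideanSpace ℂ (Fin N)) (hψ₀ : ‖ψ₀‖ = 1)
    (l : ℕ) (α β : ℕ → ℝ)
    (ψ : ℕ → EuclideanSpace ℂ (Fin N))
    (hψ0 : ψ 0 = ψ₀)
    (hψstep : ∀ k : ℕ, k < l → ψ (k + 1) = Gop M ψ₀ (α (k + 1)) (β (k + 1)) (ψ k))
    (x : ℝ) (hx : x = ‖((LinearMap.id - coordProj M : EuclideanSpace ℂ (Fin N) →ₗ[ℂ] EuclideanSpace ℂ (Fin N)) ψ₀)‖)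
    (φ : ℕ → ℝ)
    (hφodd : ∀ k : ℕ, 1 ≤ k → k ≤ l → φ (2 * k - 1) = π - α k)
    (hφeven : ∀ k : ℕ, 1 ≤ k → k ≤ l → φ (2 * k) = β k + π)
    (a : ℕ → ℝ → ℂ)
    (ha0 : ∀ y : ℝ, a 0 y = 1)
    (ha1 : ∀ y : ℝ, a 1 y = (y : ℂ))
    (harec : ∀ n : ℕ, 1 ≤ n → n ≤ 2 * l → ∀ y : ℝ,
      a (n + 1) y = (y : ℂ) * (1 + Complex.exp (-(Complex.I * ((φ n : ℝ) : ℂ)))) * a n y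
        - Complex.exp (-(Complex.I * ((φ n : ℝ) : ℂ))) * a (n - 1) y) :
    ‖((LinearMap.id - coordProj M : EuclideanSpace ℂ (Fin N) →ₗ[ℂ] EuclideanSpace ℂ (Fin N)) (ψ l))‖ = ‖a (2 * l + 1) x‖ := by
  simp only [LinearMap.sub_apply, LinearMap.id_apply] at hx ⊢
  obtain ⟨u, hu, -, hfail⟩ := exists_phase_grover_iterate hψ₀ hψ0 hψstep hx.symm l le_rfl
  obtain ⟨-, hcheb⟩ := quasiChebyshev_eq_groverCoeffs (a := fun n => a n x) hφodd hφeven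
    (ha0 x) (ha1 x) (fun n h₁ h₂ => harec n h₁ h₂ x) l le_rfl
  have hx_nonneg : 0 ≤ x := hx ▸ norm_nonneg _
  rw [hfail, hcheb, norm_smul, norm_mul, hu, one_mul, ← hx, norm_mul, Complex.norm_real,
    Real.norm_of_nonneg hx_nonneg, mul_comm]

/-- Failure amplitude as a quasi-Chebyshev polynomial: with
`x = ‖Π_M^⊥ ψ₀‖`, `|ψ_l⟩ = G(α_l,β_l)⋯G(α_1,β_1)|ψ₀⟩`, angles
`φ_{2k−1} = π − α_k`, `φ_{2k} = β_k + π`, and the quasi-Chebyshev recursion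
`a_{n+1}(y) = y(1+e^{−iφ_n})a_n(y) − e^{−iφ_n}a_{n−1}(y)`, one has
`‖Π_M^⊥ ψ_l‖ = |a_L(x)|` where `L = 2l+1`. -/
theorem failure_amplitude_eq_quasi_chebyshev
    (N : ℕ) (hN : 0 < N) (M : Finset (Fin N))
    (ψ₀ : EuclideanSpace ℂ (Fin N)) (hψ₀ : ‖ψ₀‖ = 1)
    (l : ℕ) (hl : 0 < l) (α β : ℕ → ℝ)
    (ψ : ℕ → EuclideanSpace ℂ (Fin N))
    (hψ0 : ψ 0 = ψ₀)
    (hψstep : ∀ k : ℕ, k < l → ψ (k + 1) = Gop M ψ₀ (α (k + 1)) (β (k + 1)) (ψ k))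
    (x : ℝ) (hx : x = ‖((LinearMap.id - coordProj M : EuclideanSpace ℂ (Fin N) →ₗ[ℂ] EuclideanSpace ℂ (Fin N)) ψ₀)‖)
    (φ : ℕ → ℝ)
    (hφodd : ∀ k : ℕ, 1 ≤ k → k ≤ l → φ (2 * k - 1) = π - α k)
    (hφeven : ∀ k : ℕ, 1 ≤ k → k ≤ l → φ (2 * k) = β k + π)
    (a : ℕ → ℝ → ℂ)
    (ha0 : ∀ y : ℝ, a 0 y = 1)
    (ha1 : ∀ y : ℝ, a 1 y = (y : ℂ))
    (harec : ∀ n : ℕ, 1 ≤ n → n ≤ 2 * l → ∀ y : ℝ,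
      a (n + 1) y = (y : ℂ) * (1 + Complex.exp (-(Complex.I * ((φ n : ℝ) : ℂ)))) * a n y
        - Complex.exp (-(Complex.I * ((φ n : ℝ) : ℂ))) * a (n - 1) y) :
    ‖((LinearMap.id - coordProj M : EuclideanSpace ℂ (Fin N) →ₗ[ℂ] EuclideanSpace ℂ (Fin N)) (ψ l))‖ = ‖a (2 * l + 1) x‖ :=
  failure_amplitude_eq_quasi_chebyshev_general N M ψ₀ hψ₀ l α β ψ hψ0 hψstep x hx φ hφodd hφeven a
    ha0 ha1 harec
end

section
/- Matrix-product form of the amplitude recursion. Let x be a real number with 0 ≤ x ≤ 1, and for a real angle φ define the 2×2 complex matrix A(φ) with rows (x, e^{−iφ}·√(1−x²)) and (√(1−x²), −x·e^{−iφ}). Let (φ'_n)_{n≥0} be any sequence of real angles, and define vectors v_n ∈ ℂ² by v_0 = (1, 0)ᵀ and v_{n+1} = A(φ'_n)·v_n. Let a_n denote the first component of v_n. Then a_0 = 1, a_1 = x, and for all n ≥ 1, a_{n+1} = x·(1 − e^{−iφ'_n})·a_n + e^{−iφ'_n}·a_{n−1}. -/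
/-- Matrix-product form of the amplitude recursion. With
`A(φ) = !![x, e^{−iφ}√(1−x²); √(1−x²), −x·e^{−iφ}]`, `v_0 = (1,0)ᵀ` and
`v_{n+1} = A(φ'_n)·v_n`, the first components `a_n = v_n 0` satisfy `a_0 = 1`,
`a_1 = x`, and `a_{n+1} = x(1 − e^{−iφ'_n})a_n + e^{−iφ'_n}a_{n−1}` for `n ≥ 1`. -/
theorem matrix_product_amplitude_recursion
    (x : ℝ) (hx0 : 0 ≤ x) (hx1 : x ≤ 1)
    (A : ℝ → Matrix (Fin 2) (Fin 2) ℂ)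
    (hA : ∀ φ : ℝ,
      A φ = !![(x : ℂ), Complex.exp (-(Complex.I * (φ : ℂ))) * ((Real.sqrt (1 - x ^ 2) : ℝ) : ℂ);
               ((Real.sqrt (1 - x ^ 2) : ℝ) : ℂ), -(x : ℂ) * Complex.exp (-(Complex.I * (φ : ℂ)))])
    (φ' : ℕ → ℝ)
    (v : ℕ → Fin 2 → ℂ)
    (hv0 : v 0 = ![1, 0])
    (hv : ∀ n : ℕ, v (n + 1) = (A (φ' n)).mulVec (v n)) :
    v 0 0 = 1 ∧ v 1 0 = (x : ℂ) ∧
    ∀ n : ℕ, 1 ≤ n →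
      v (n + 1) 0 = (x : ℂ) * (1 - Complex.exp (-(Complex.I * ((φ' n : ℝ) : ℂ)))) * v n 0
        + Complex.exp (-(Complex.I * ((φ' n : ℝ) : ℂ))) * v (n - 1) 0 := by
  set s : ℂ := ((Real.sqrt (1 - x ^ 2) : ℝ) : ℂ) with hs
  have hs2 : s ^ 2 = 1 - (x : ℂ) ^ 2 := by
    rw [hs]
    norm_cast
    rw [Real.sq_sqrt]
    nlinarith
  have h0 : ∀ n : ℕ, v (n + 1) 0 =
      (x : ℂ) * v n 0 + Complex.exp (-(Complex.I * ((φ' n : ℝ) : ℂ))) * s * v n 1 := by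
    intro n
    rw [hv n, hA]
    simp [Matrix.mulVec, dotProduct, Fin.sum_univ_two]
  have h1 : ∀ n : ℕ, v (n + 1) 1 =
      s * v n 0 - (x : ℂ) * Complex.exp (-(Complex.I * ((φ' n : ℝ) : ℂ))) * v n 1 := by
    intro n
    rw [hv n, hA]
    simp [Matrix.mulVec, dotProduct, Fin.sum_univ_two]
    ring
  refine ⟨by simp [hv0], ?_, ?_⟩
  · rw [h0 0]; simp [hv0]
  · rintro n hn
    obtain ⟨m, rfl⟩ : ∃ m, n = m + 1 := ⟨n - 1, (Nat.succ_pred_eq_of_pos hn).symm⟩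
    simp only [Nat.add_sub_cancel]
    have e1 := h0 (m + 1)
    have e2 := h1 m
    have e3 := h0 m
    set e := Complex.exp (-(Complex.I * ((φ' (m+1) : ℝ) : ℂ)))
    set e' := Complex.exp (-(Complex.I * ((φ' m : ℝ) : ℂ)))
    -- key: e' * s * v m 1 = v (m+1) 0 - x * v m 0
    have key : e' * s * v m 1 = v (m + 1) 0 - (x : ℂ) * v m 0 := by
      rw [e3]; ring
    rw [e1, e2]
    have : e * s * (s * v m 0 - (x:ℂ) * e' * v m 1)
        = e * (s^2 * v m 0) - (x:ℂ) * e * (e' * s * v m 1) := by ring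
    rw [this, key, hs2]
    ring
end

section
/- Decoupling of the coupled amplitude recursion. Let x ∈ ℂ, let (φ_n)_{n≥0} be a sequence of real numbers, and define complex sequences (a_n) and (b_n) by a_0 = 1, b_0 = 0, and for all n ≥ 0: a_{n+1} = x·a_n + e^{−iφ_n}·(1−x²)·b_n and b_{n+1} = a_n − x·e^{−iφ_n}·b_n. Then for all n ≥ 1, a_{n+1} = x·(1 − e^{−iφ_n})·a_n + e^{−iφ_n}·a_{n−1}. -/
/-- Decoupling of the coupled amplitude recursion. -/
theorem decouple_amplitude_recursion
    (x : ℂ) (φ : ℕ → ℝ) (a b : ℕ → ℂ)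
    (ha0 : a 0 = 1) (hb0 : b 0 = 0)
    (ha : ∀ n : ℕ, a (n + 1) = x * a n + Complex.exp (-(Complex.I * (φ n))) * (1 - x ^ 2) * b n)
    (hb : ∀ n : ℕ, b (n + 1) = a n - x * Complex.exp (-(Complex.I * (φ n))) * b n) :
    ∀ n : ℕ, 1 ≤ n →
      a (n + 1) = x * (1 - Complex.exp (-(Complex.I * (φ n)))) * a n
        + Complex.exp (-(Complex.I * (φ n))) * a (n - 1) := by
  rintro (_ | m) hn
  · omega
  · simp only [Nat.add_sub_cancel]
    rw [ha (m + 1), hb m, ha m]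
    ring
end

section
/- Product formula for the denominator D_L. Let γ ∈ (0,1], let l be a nonnegative integer, and set L = 2l+1 and t_n = √(1−γ²)·tan(nπ/L) for each integer n. Then the complex product ∏_{n=0}^{2l} (1 + i·t_n) equals γ^L · T_L(1/γ), where T_L is the Chebyshev polynomial of the first kind of degree L (evaluated at the real number 1/γ, the result being viewed as a complex number). -/
/-!
Write `s = √(1 - γ²)` and `ζ = exp (2πi/L)`. Since `e^{2iθ} = ζⁿ` for `θ = nπ/L`, each factor
`1 + i s tan θ` equals `((1 - s) + ζⁿ (1 + s)) / (1 + ζⁿ)`, and for odd `L` the roots of unity give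
`∏ₙ (x + ζⁿ y) = x^L + y^L`; hence the product is `((1 - s)^L + (1 + s)^L) / 2`.
On the other side `(1 - s)(1 + s) = γ²`, so `1/γ = (u + u⁻¹)/2` with `u = (1 - s)/γ`, and
`T_L((u + u⁻¹)/2) = (u^L + u^{-L})/2` (the Dickson polynomial identity) gives the same value
for `γ^L T_L(1/γ)`.
-/

open Real Polynomial Finset

theorem IsPrimitiveRoot.prod_nthRootsFinset_eq_prod_range {R M : Type*} [CommRing R] [IsDomain R]
    [CommMonoid M] {ζ : R} {n : ℕ} (hζ : IsPrimitiveRoot ζ n) (f : R → M) :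
    ∏ η ∈ nthRootsFinset n (1 : R), f η = ∏ i ∈ range n, f (ζ ^ i) := by
  classical
  rw [nthRootsFinset, Finset.prod_eq_multiset_prod, Multiset.toFinset_val,
    Multiset.dedup_eq_self.2 (nthRoots_one_nodup hζ), hζ.nthRoots_eq (one_pow n)]
  simp [Finset.prod_eq_multiset_prod]

theorem IsPrimitiveRoot.prod_range_add_pow_mul {R : Type*} [CommRing R] [IsDomain R]
    {ζ : R} {n : ℕ} (hodd : Odd n) (hζ : IsPrimitiveRoot ζ n) (x y : R) :
    ∏ i ∈ range n, (x + ζ ^ i * y) = x ^ n + y ^ n := by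
  rw [hζ.pow_add_pow_eq_prod_add_mul x y hodd, hζ.prod_nthRootsFinset_eq_prod_range]

namespace Polynomial.Chebyshev

theorem T_eval_half_mul_add {R : Type*} [CommRing R] [Invertible (2 : R)]
    {x y : R} (h : x * y = 1) (n : ℕ) :
    (T R n).eval (⅟2 * (x + y)) = ⅟2 * (x ^ n + y ^ n) := by
  rw [chebyshev_T_eq_dickson_one_one, eval_mul, eval_C, eval_comp, eval_mul, eval_ofNat, eval_X,
    ← mul_assoc, mul_invOf_self, one_mul, dickson_one_one_eval_add_inv x y h]

theorem pow_mul_T_eval_inv {K : Type*} [Field K] [Invertible (2 : K)]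
    {γ a b : K} (hγ : γ ≠ 0) (hab : a * b = γ ^ 2) (hsum : a + b = 2) (n : ℕ) :
    γ ^ n * (T K n).eval γ⁻¹ = ⅟2 * (a ^ n + b ^ n) := by
  have hinv : γ⁻¹ = ⅟2 * (a / γ + b / γ) := by
    rw [← add_div, hsum, ← mul_div_assoc, invOf_mul_self, one_div]
  have hprod : a / γ * (b / γ) = 1 := by
    field_simp
    exact hab
  rw [hinv, T_eval_half_mul_add hprod, div_pow, div_pow]
  field_simp

end Polynomial.Chebyshev

namespace Complex

theorem one_add_I_mul_mul_tan {s θ : ℂ} (hθ : cos θ ≠ 0) :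
    1 + I * (s * tan θ) = (1 - s + exp (θ * I) ^ 2 * (1 + s)) / (1 + exp (θ * I) ^ 2) := by
  have hx : exp (θ * I) ≠ 0 := exp_ne_zero _
  have hcos : cos θ = (1 + exp (θ * I) ^ 2) / (2 * exp (θ * I)) := by
    rw [cos, neg_mul, exp_neg]
    field_simp
    ring
  have hsin : sin θ = (1 - exp (θ * I) ^ 2) * I / (2 * exp (θ * I)) := by
    rw [sin, neg_mul, exp_neg]
    field_simp
  rw [tan, hsin, hcos]
  rw [hcos] at hθ
  generalize exp (θ * I) = x at *
  have hx2 : 1 + x ^ 2 ≠ 0 := (div_ne_zero_iff.1 hθ).1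
  field_simp
  linear_combination (1 - x ^ 2) * s * I_sq

theorem cos_nat_mul_pi_div_ne_zero {L : ℕ} (hL : Odd L) (n : ℕ) : cos (n * π / L) ≠ 0 := by
  intro h
  obtain ⟨k, hk⟩ := cos_eq_zero_iff.1 h
  have hL0 : (L : ℂ) ≠ 0 := by exact_mod_cast hL.pos.ne'
  have hk' : ((2 * n : ℤ) : ℂ) = ((2 * k + 1) * L : ℤ) := by
    push_cast
    field_simp at hk
    linear_combination hk
  have hodd : Odd ((2 * k + 1) * (L : ℤ)) := (odd_two_mul_add_one k).mul hL.natCast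
  rw [← Int.cast_injective hk'] at hodd
  exact Int.not_even_iff_odd.2 hodd (even_two_mul _)

theorem prod_one_add_I_mul_mul_tan {L : ℕ} (hL : Odd L) (s : ℂ) :
    ∏ n ∈ range L, (1 + I * (s * tan (n * π / L))) = ((1 - s) ^ L + (1 + s) ^ L) / 2 := by
  have hζ : IsPrimitiveRoot (exp (2 * π * I / L)) L := isPrimitiveRoot_exp L hL.pos.ne'
  have hsq (n : ℕ) : exp (n * π / L * I) ^ 2 = exp (2 * π * I / L) ^ n := by
    rw [← exp_nat_mul, ← exp_nat_mul]
    congr 1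
    push_cast
    ring
  calc ∏ n ∈ range L, (1 + I * (s * tan (n * π / L)))
      = ∏ n ∈ range L, (1 - s + exp (2 * π * I / L) ^ n * (1 + s)) /
          (1 + exp (2 * π * I / L) ^ n * 1) :=
        prod_congr rfl fun n _ => by
          rw [one_add_I_mul_mul_tan (cos_nat_mul_pi_div_ne_zero hL n), hsq, mul_one]
    _ = ((1 - s) ^ L + (1 + s) ^ L) / 2 := by
        rw [prod_div_distrib, hζ.prod_range_add_pow_mul hL, hζ.prod_range_add_pow_mul hL]
        norm_num

end Complex

/-- Product formula for the denominator `D_L`: with `L = 2l+1` and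
`t_n = √(1−γ²)·tan(nπ/L)`, one has `∏_{n=0}^{2l} (1 + i·t_n) = γ^L · T_L(1/γ)`. -/
theorem denominator_product_formula
    (γ : ℝ) (hγ : γ ∈ Set.Ioc (0 : ℝ) 1) (l : ℕ) :
    ∏ n ∈ Finset.range (2 * l + 1),
        (1 + Complex.I * ((Real.sqrt (1 - γ ^ 2) * Real.tan ((n : ℝ) * π / (2 * l + 1)) : ℝ) : ℂ))
      = (γ : ℂ) ^ (2 * l + 1)
        * (((Polynomial.Chebyshev.T ℝ (2 * l + 1)).eval (1 / γ) : ℝ) : ℂ) := by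
  obtain ⟨hγ0, hγ1⟩ := hγ
  set s := √(1 - γ ^ 2)
  have hs : (1 - s) * (1 + s) = γ ^ 2 := by
    linear_combination -sq_sqrt (by nlinarith : 0 ≤ 1 - γ ^ 2)
  have hT := Chebyshev.pow_mul_T_eval_inv (γ := (γ : ℂ)) (a := 1 - s) (b := 1 + s)
    (by exact_mod_cast hγ0.ne') (by exact_mod_cast hs) (by ring) (2 * l + 1)
  have hprod := Complex.prod_one_add_I_mul_mul_tan (odd_two_mul_add_one l) s
  push_cast at hT hprod ⊢
  rw [hprod, one_div, hT, invOf_eq_inv]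
  ring
end

section
/- Product representation of odd Chebyshev polynomials. Let l be a nonnegative integer and set L = 2l+1. Then for every real number γ, γ · ∏_{n=1}^{l} (γ² + (γ²−1)·tan²(nπ/L)) = T_L(γ), where T_L is the Chebyshev polynomial of the first kind of degree L. -/
open Real

private lemma natDegree_T_le_aux (n : ℕ) :
    (Polynomial.Chebyshev.T ℝ n).natDegree ≤ n ∧
    (Polynomial.Chebyshev.T ℝ (n + 1)).natDegree ≤ n + 1 := by
  induction n with
  | zero => constructor <;> simp
  | succ n ih =>
    obtain ⟨h1, h2⟩ := ih
    refine ⟨by exact_mod_cast h2, ?_⟩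
    have hcast : (((n : ℕ) + 1 : ℕ) : ℤ) + 1 = (n : ℤ) + 2 := by push_cast; ring
    rw [hcast, Polynomial.Chebyshev.T_add_two]
    refine le_trans (Polynomial.natDegree_sub_le _ _)
      (max_le ?_ (le_trans h1 (by omega)))
    calc (2 * Polynomial.X * Polynomial.Chebyshev.T ℝ ((n : ℤ) + 1)).natDegree
        ≤ (2 * Polynomial.X : Polynomial ℝ).natDegree
          + (Polynomial.Chebyshev.T ℝ ((n : ℤ) + 1)).natDegree :=
          Polynomial.natDegree_mul_le
      _ ≤ 1 + (n + 1) := by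
          refine add_le_add (le_trans Polynomial.natDegree_mul_le (by simp)) h2
      _ ≤ n + 1 + 1 := by omega

/-- Product representation of odd Chebyshev polynomials:
`γ · ∏_{n=1}^{l} (γ² + (γ²−1)·tan²(nπ/L)) = T_L(γ)` with `L = 2l+1`. -/
theorem chebyshev_odd_product_representation (l : ℕ) (γ : ℝ) :
    γ * ∏ n ∈ Finset.Icc 1 l,
        (γ ^ 2 + (γ ^ 2 - 1) * Real.tan ((n : ℝ) * π / (2 * l + 1)) ^ 2)
      = (Polynomial.Chebyshev.T ℝ (2 * l + 1)).eval γ := by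
  classical
  have hLpos : (0 : ℝ) < 2 * l + 1 := by positivity
  have hLne : (2 * (l : ℝ) + 1) ≠ 0 := by positivity
  set P : Polynomial ℝ := Polynomial.X * ∏ n ∈ Finset.Icc 1 l,
      (Polynomial.X ^ 2 + (Polynomial.X ^ 2 - 1) *
        Polynomial.C (Real.tan ((n : ℝ) * π / (2 * l + 1)) ^ 2)) with hPdef
  have hevalP : ∀ x : ℝ, P.eval x = x * ∏ n ∈ Finset.Icc 1 l,
      (x ^ 2 + (x ^ 2 - 1) * Real.tan ((n : ℝ) * π / (2 * l + 1)) ^ 2) := by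
    intro x
    simp [hPdef, Polynomial.eval_prod]
  suffices hPT : P = Polynomial.Chebyshev.T ℝ (2 * l + 1) by
    rw [← hPT, hevalP]
  -- degree bounds
  have hdegP : P.natDegree ≤ 2 * l + 1 := by
    refine le_trans Polynomial.natDegree_mul_le ?_
    have hfac : ∀ c : ℝ,
        (Polynomial.X ^ 2 + (Polynomial.X ^ 2 - 1) * Polynomial.C c).natDegree ≤ 2 := by
      intro c
      have h1 : ((Polynomial.X ^ 2 - 1 : Polynomial ℝ) * Polynomial.C c).natDegree ≤ 2 := by
        refine le_trans Polynomial.natDegree_mul_le ?_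
        have h2 : ((Polynomial.X ^ 2 : Polynomial ℝ) - 1).natDegree ≤ 2 :=
          le_trans (Polynomial.natDegree_sub_le _ _) (by simp)
        simpa using h2
      exact le_trans (Polynomial.natDegree_add_le _ _) (max_le (by simp) h1)
    have hprod : (∏ n ∈ Finset.Icc 1 l, (Polynomial.X ^ 2 + (Polynomial.X ^ 2 - 1) *
        Polynomial.C (Real.tan ((n : ℝ) * π / (2 * l + 1)) ^ 2))).natDegree ≤ 2 * l := by
      refine le_trans (Polynomial.natDegree_prod_le _ _) ?_
      refine le_trans (Finset.sum_le_sum fun n _ => hfac _) ?_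
      simp [Nat.card_Icc, mul_comm]
    have hX : (Polynomial.X : Polynomial ℝ).natDegree ≤ 1 := by simp
    omega
  have hdegT : (Polynomial.Chebyshev.T ℝ (2 * l + 1)).natDegree ≤ 2 * l + 1 := by
    have h := (natDegree_T_le_aux (2 * l + 1)).1
    have hc : (((2 * l + 1 : ℕ) : ℤ)) = 2 * (l : ℤ) + 1 := by push_cast; ring
    rwa [hc] at h
  -- the 2l+2 points where P and T agree
  set g : ℕ → ℝ := fun k =>
    if k = 2 * l + 1 then π / 2 else ((k : ℝ) - l) * π / (2 * l + 1) with hgdef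
  have hg_mem : ∀ k : Fin (2 * l + 2), g k ∈ Set.Icc (-(π / 2)) (π / 2) := by
    rintro ⟨k, hk⟩
    simp only [hgdef]
    split_ifs with h
    · constructor <;> nlinarith [pi_pos]
    · have hk2l : (k : ℝ) ≤ 2 * l := by
        have : k ≤ 2 * l := by omega
        exact_mod_cast this
      have hk0 : (0 : ℝ) ≤ (k : ℝ) := Nat.cast_nonneg k
      constructor
      · rw [le_div_iff₀ hLpos]
        nlinarith [pi_pos]
      · rw [div_le_iff₀ hLpos]
        nlinarith [pi_pos]
  have hg_mono : StrictMono (fun k : Fin (2 * l + 2) => g k) := by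
    rintro ⟨j, hj⟩ ⟨k, hk⟩ hjk
    have hjk' : j < k := hjk
    simp only [hgdef]
    have hjne : j ≠ 2 * l + 1 := by omega
    rw [if_neg hjne]
    have hj2l : (j : ℝ) ≤ 2 * l := by
      have : j ≤ 2 * l := by omega
      exact_mod_cast this
    split_ifs with h
    · rw [div_lt_iff₀ hLpos]
      nlinarith [pi_pos]
    · have hjk2 : (j : ℝ) < k := by exact_mod_cast hjk'
      rw [div_lt_div_iff₀ hLpos hLpos]
      nlinarith [pi_pos, mul_pos (mul_pos (sub_pos.mpr hjk2) pi_pos) hLpos]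
  have hf_inj : Function.Injective (fun k : Fin (2 * l + 2) => Real.sin (g k)) := by
    intro j k h
    exact hg_mono.injective (Real.strictMonoOn_sin.injOn (hg_mem j) (hg_mem k) h)
  -- evaluations agree at all these points
  have key : ∀ k : Fin (2 * l + 2),
      (P - Polynomial.Chebyshev.T ℝ (2 * l + 1)).eval (Real.sin (g k)) = 0 := by
    rintro ⟨k, hk⟩
    rw [Polynomial.eval_sub, sub_eq_zero]
    by_cases hk1 : k = 2 * l + 1
    · -- the point 1 = sin (π/2)
      have hg1 : g k = π / 2 := by simp [hgdef, hk1]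
      rw [hg1, Real.sin_pi_div_two]
      have hT1 : (Polynomial.Chebyshev.T ℝ (2 * l + 1)).eval 1 = 1 := by
        have h := Polynomial.Chebyshev.T_real_cos 0 (2 * (l : ℤ) + 1)
        simpa using h
      rw [hT1, hevalP]
      have : ∀ n ∈ Finset.Icc 1 l,
          ((1 : ℝ) ^ 2 + ((1 : ℝ) ^ 2 - 1) * Real.tan ((n : ℝ) * π / (2 * l + 1)) ^ 2) = 1 := by
        intro n _; ring
      rw [Finset.prod_congr rfl this]
      simp
    · -- the points sin(mπ/L), m = k - l ∈ [-l, l]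
      have hgk : g k = ((k : ℝ) - l) * π / (2 * l + 1) := by simp [hgdef, hk1]
      have hk2l : k ≤ 2 * l := by omega
      -- T vanishes there
      have hT0 : (Polynomial.Chebyshev.T ℝ (2 * l + 1)).eval (Real.sin (g k)) = 0 := by
        rw [← Real.cos_pi_div_two_sub, Polynomial.Chebyshev.T_real_cos,
          Real.cos_eq_zero_iff]
        refine ⟨2 * l - k, ?_⟩
        rw [hgk]
        push_cast
        field_simp
        ring
      rw [hT0, hevalP]
      by_cases hkl : k = l
      · have h0 : g k = 0 := by rw [hgk, hkl]; ring
        simp [h0]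
      · -- nonzero m: a factor of the product vanishes
        set n₀ : ℕ := if l < k then k - l else l - k with hn₀def
        have hn₀mem : n₀ ∈ Finset.Icc 1 l := by
          simp only [Finset.mem_Icc, hn₀def]
          split_ifs <;> omega
        set x₀ : ℝ := (n₀ : ℝ) * π / (2 * l + 1) with hx₀def
        have hsq : Real.sin (g k) ^ 2 = Real.sin x₀ ^ 2 := by
          rcases lt_or_gt_of_ne (fun h => hkl h) with hlt | hgt
          · -- k < l : g k = -x₀
            have hn₀ : (n₀ : ℝ) = (l : ℝ) - k := by
              rw [hn₀def, if_neg (by omega)]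
              push_cast [Nat.cast_sub (le_of_lt hlt)]
              ring
            have : g k = -x₀ := by
              rw [hgk, hx₀def, hn₀]; ring
            rw [this, Real.sin_neg]; ring
          · -- k > l : g k = x₀
            have hn₀ : (n₀ : ℝ) = (k : ℝ) - l := by
              rw [hn₀def, if_pos hgt]
              push_cast [Nat.cast_sub (le_of_lt hgt)]
              ring
            have : g k = x₀ := by
              rw [hgk, hx₀def, hn₀]
            rw [this]
        have hx₀pos : 0 < x₀ := by
          have h1 : (1 : ℝ) ≤ (n₀ : ℝ) := by
            exact_mod_cast (Finset.mem_Icc.mp hn₀mem).1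
          rw [hx₀def]
          positivity
        have hx₀lt : x₀ < π / 2 := by
          have h2 : (n₀ : ℝ) ≤ l := by
            exact_mod_cast (Finset.mem_Icc.mp hn₀mem).2
          rw [hx₀def, div_lt_iff₀ hLpos]
          nlinarith [pi_pos]
        have hcos : Real.cos x₀ ≠ 0 := by
          refine ne_of_gt (Real.cos_pos_of_mem_Ioo ⟨?_, hx₀lt⟩)
          linarith [pi_pos]
        have hfactor : Real.sin (g k) ^ 2 +
            (Real.sin (g k) ^ 2 - 1) * Real.tan x₀ ^ 2 = 0 := by
          rw [hsq]
          have hpyth : Real.sin x₀ ^ 2 - 1 = -(Real.cos x₀ ^ 2) := by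
            have := Real.sin_sq_add_cos_sq x₀; linarith
          rw [hpyth, Real.tan_eq_sin_div_cos, div_pow]
          field_simp
          ring
        rw [Finset.prod_eq_zero hn₀mem (by rw [← hx₀def]; exact hfactor)]
        ring
  -- conclude P = T
  have hzero : P - Polynomial.Chebyshev.T ℝ (2 * l + 1) = 0 := by
    refine Polynomial.eq_zero_of_natDegree_lt_card_of_eval_eq_zero _ hf_inj key ?_
    have hcard : Fintype.card (Fin (2 * l + 2)) = 2 * l + 2 := by simp
    have hdeg : (P - Polynomial.Chebyshev.T ℝ (2 * l + 1)).natDegree ≤ 2 * l + 1 :=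
      le_trans (Polynomial.natDegree_sub_le _ _) (max_le hdegP hdegT)
    omega
  exact sub_eq_zero.mp hzero
end

section
/- Elementary symmetric sums of i·tan at equally spaced angles. Let L ≥ 3 be an odd integer and write t(n) = tan(nπ/L). Then for every k ∈ {0,1,…,L}, the sum over all k-element subsets S of {0,1,…,L−1} of the products ∏_{d∈S} i·t(d) equals binom(L,k) if k is even and equals 0 if k is odd (as a complex number). -/
open Real

/-!
With `ζ = exp (2πi/L)` one has `(x + i tan (dπ/L)) (1 + ζ ^ d) = (x - 1) + ζ ^ d (x + 1)`.
Multiplying over `d < L` and using `∏ d, (a - ζ ^ d b) = a ^ L - b ^ L` together with the oddness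
of `L` gives `∏ d, (x + i tan (dπ/L)) = ((x + 1) ^ L + (x - 1) ^ L) / 2`. By Vieta, the sums in
question are the coefficients of this polynomial.
-/

open Polynomial Finset in
theorem IsPrimitiveRoot.prod_range_sub_pow_mul {R : Type*} [CommRing R] [IsDomain R] {ζ : R}
    {n : ℕ} (hζ : IsPrimitiveRoot ζ n) (hn : 0 < n) (x c : R) :
    ∏ i ∈ range n, (x - ζ ^ i * c) = x ^ n - c ^ n := by
  simpa [eval_prod] using congrArg (eval x) (X_pow_sub_C_eq_prod hζ hn rfl).symm

theorem Real.cos_nat_mul_pi_div_ne_zero {L : ℕ} (hL : Odd L) (d : ℕ) :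
    cos (d * π / L) ≠ 0 := by
  rw [Real.cos_ne_zero_iff]
  intro k hk
  have hL0 : (L : ℝ) ≠ 0 := Nat.cast_ne_zero.mpr hL.pos.ne'
  have hparity : (2 * d : ℤ) = (2 * k + 1) * L := by
    have : (2 * d : ℝ) = (2 * k + 1) * L := by
      field_simp at hk
      nlinarith [Real.pi_pos]
    exact_mod_cast this
  exact Int.not_even_iff_odd.mpr ((odd_two_mul_add_one k).mul (hL.natCast (R := ℤ)))
    (hparity ▸ even_two_mul _)

open Complex in
theorem Complex.add_I_mul_tan_mul_one_add_exp {θ : ℂ} (hθ : cos θ ≠ 0) (x : ℂ) :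
    (x + I * tan θ) * (1 + exp (2 * θ * I)) = x - 1 + exp (2 * θ * I) * (x + 1) := by
  have hexp : exp (2 * θ * I) = (cos θ + sin θ * I) ^ 2 := by
    rw [← exp_mul_I, ← exp_nat_mul]; ring_nf
  rw [tan_eq_sin_div_cos, hexp]
  field_simp
  linear_combination (-(I * sin θ + cos θ)) * sin_sq_add_cos_sq θ
    + (cos θ * sin θ ^ 2 + I * sin θ ^ 3) * I_sq

theorem prod_range_add_I_mul_tan {L : ℕ} (hL : Odd L) (x : ℂ) :
    ∏ d ∈ Finset.range L, (x + Complex.I * ((tan (d * π / L) : ℝ) : ℂ))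
      = ((x + 1) ^ L + (x - 1) ^ L) / 2 := by
  set ζ : ℂ := Complex.exp (2 * π * Complex.I / L)
  have hζ : IsPrimitiveRoot ζ L := Complex.isPrimitiveRoot_exp L hL.pos.ne'
  have hζ_pow (d : ℕ) : ζ ^ d = Complex.exp (2 * ((d * π / L : ℝ) : ℂ) * Complex.I) := by
    rw [← Complex.exp_nat_mul]; push_cast; ring_nf
  have hterm (d : ℕ) : (x + Complex.I * ((tan (d * π / L) : ℝ) : ℂ)) * (1 + ζ ^ d)
      = x - 1 - ζ ^ d * (-(x + 1)) := by
    rw [hζ_pow, Complex.ofReal_tan, Complex.add_I_mul_tan_mul_one_add_exp]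
    · ring
    · exact_mod_cast Real.cos_nat_mul_pi_div_ne_zero hL d
  have hden : ∏ d ∈ Finset.range L, (1 + ζ ^ d) = 2 := by
    simpa [hL.neg_one_pow, sub_eq_add_neg, one_add_one_eq_two] using
      hζ.prod_range_sub_pow_mul hL.pos 1 (-1)
  rw [eq_div_iff two_ne_zero, ← hden, ← Finset.prod_mul_distrib,
    Finset.prod_congr rfl fun d _ => hterm d, hζ.prod_range_sub_pow_mul hL.pos, hL.neg_pow]
  ring

open Polynomial in
theorem coeff_X_add_one_pow_add_X_sub_one_pow {R : Type*} [CommRing R] {n k : ℕ} (hk : k ≤ n) :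
    ((X + 1 : R[X]) ^ n + (X - 1) ^ n).coeff (n - k)
      = if Even k then 2 * (n.choose k : R) else 0 := by
  rw [coeff_add, coeff_X_add_one_pow, sub_eq_add_neg, ← C_1, ← C_neg, coeff_X_add_C_pow,
    Nat.sub_sub_self hk, Nat.choose_symm hk]
  rcases Nat.even_or_odd k with heven | hodd
  · rw [if_pos heven, heven.neg_one_pow]; ring
  · rw [if_neg (Nat.not_even_iff_odd.mpr hodd), hodd.neg_one_pow]; ring

open Polynomial in
theorem prod_range_X_add_C_I_mul_tan {L : ℕ} (hL : Odd L) :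
    ∏ d ∈ Finset.range L, (X + C (Complex.I * ((tan (d * π / L) : ℝ) : ℂ)))
      = C 2⁻¹ * ((X + 1) ^ L + (X - 1) ^ L) := by
  refine Polynomial.funext fun x => ?_
  simp only [eval_prod, eval_add, eval_sub, eval_mul, eval_pow, eval_X, eval_C, eval_one,
    prod_range_add_I_mul_tan hL]
  ring

theorem elementary_symmetric_sums_of_i_tan_general
    (L : ℕ) (hLodd : Odd L) (k : ℕ) (hk : k ≤ L) :
    ∑ S ∈ Finset.powersetCard k (Finset.range L),
        ∏ d ∈ S, (Complex.I * ((Real.tan ((d : ℝ) * π / L) : ℝ) : ℂ))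
      = if Even k then ((L.choose k : ℕ) : ℂ) else 0 := by
  calc _ = (∏ d ∈ Finset.range L, (Polynomial.X
          + Polynomial.C (Complex.I * ((tan (d * π / L) : ℝ) : ℂ)))).coeff (L - k) := by
        rw [Finset.prod_X_add_C_coeff _ _ (by simp), Finset.card_range, Nat.sub_sub_self hk]
    _ = _ := by
        rw [prod_range_X_add_C_I_mul_tan hLodd, Polynomial.coeff_C_mul,
          coeff_X_add_one_pow_add_X_sub_one_pow hk]
        split_ifs <;> simp

/-- Elementary symmetric sums of `i·tan` at equally spaced angles: for odd
`L ≥ 3` and `k ∈ {0,…,L}`, the sum over all `k`-element subsets `S` of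
`{0,…,L−1}` of `∏_{d∈S} i·tan(dπ/L)` equals `binom(L,k)` if `k` is even
and `0` if `k` is odd. -/
theorem elementary_symmetric_sums_of_i_tan
    (L : ℕ) (hL : 3 ≤ L) (hLodd : Odd L) (k : ℕ) (hk : k ≤ L) :
    ∑ S ∈ Finset.powersetCard k (Finset.range L),
        ∏ d ∈ S, (Complex.I * ((Real.tan ((d : ℝ) * π / L) : ℝ) : ℂ))
      = if Even k then ((L.choose k : ℕ) : ℂ) else 0 :=
  elementary_symmetric_sums_of_i_tan_general L hLodd k hk
end

section
/- Chebyshev growth bound from the iteration count. Let w ∈ (0,1) and δ ∈ (0,1), set γ = √(1−w²), and let L be a positive integer with L ≥ ln(2/δ)/w. Then T_L(1/γ) ≥ 1/δ, where T_L is the Chebyshev polynomial of the first kind of degree L. -/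
/-!
Write `1/γ = cosh t` with `t = artanh w`. Then `T_L(1/γ) = cosh (L t) ≥ e^{L t}/2`, and
`t ≥ w` (first term of the series `artanh w = w + w³/3 + …`), so `T_L(1/γ) ≥ e^{L w}/2 ≥ 1/δ`
as soon as `L w ≥ log (2/δ)`.
-/

open Real Polynomial.Chebyshev

lemma Real.exp_div_two_le_cosh (x : ℝ) : exp x / 2 ≤ cosh x := by
  rw [cosh_eq]
  linarith [exp_pos (-x)]

lemma Real.self_le_artanh {x : ℝ} (hx₀ : 0 ≤ x) (hx₁ : x < 1) : x ≤ artanh x := by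
  rw [artanh_eq_half_log ⟨by linarith, hx₁.le⟩]
  simpa using sum_range_le_log_div hx₀ hx₁ 1

lemma Polynomial.Chebyshev.exp_mul_div_two_le_T_real_one_div_sqrt_one_sub_sq (n : ℕ) {w : ℝ}
    (hw₀ : 0 ≤ w) (hw₁ : w < 1) :
    exp (n * w) / 2 ≤ (T ℝ n).eval (1 / √(1 - w ^ 2)) := by
  rw [← cosh_artanh ⟨by linarith, hw₁⟩, ← Int.cast_natCast, T_real_cosh, Int.cast_natCast]
  calc exp (n * w) / 2 ≤ exp (n * artanh w) / 2 := by
        gcongr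
        exact self_le_artanh hw₀ hw₁
    _ ≤ cosh (n * artanh w) := exp_div_two_le_cosh _

theorem chebyshev_growth_bound_general
    (w δ : ℝ) (hw : w ∈ Set.Ioo (0 : ℝ) 1) (hδ : δ ∈ Set.Ioo (0 : ℝ) 1)
    (L : ℕ) (hLge : (L : ℝ) ≥ Real.log (2 / δ) / w) :
    (Polynomial.Chebyshev.T ℝ L).eval (1 / Real.sqrt (1 - w ^ 2)) ≥ 1 / δ := by
  obtain ⟨hw₀, hw₁⟩ := hw
  have hlog : log (2 / δ) ≤ L * w := (div_le_iff₀ hw₀).1 hLge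
  calc 1 / δ = exp (log (2 / δ)) / 2 := by
        rw [exp_log (div_pos two_pos hδ.1)]
        ring
    _ ≤ exp (L * w) / 2 := by gcongr
    _ ≤ (T ℝ L).eval (1 / √(1 - w ^ 2)) :=
        exp_mul_div_two_le_T_real_one_div_sqrt_one_sub_sq L hw₀.le hw₁

/-- Chebyshev growth bound from the iteration count:
if `L ≥ ln(2/δ)/w` then `T_L(1/√(1−w²)) ≥ 1/δ`. -/
theorem chebyshev_growth_bound
    (w δ : ℝ) (hw : w ∈ Set.Ioo (0 : ℝ) 1) (hδ : δ ∈ Set.Ioo (0 : ℝ) 1)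
    (L : ℕ) (hL : 0 < L) (hLge : (L : ℝ) ≥ Real.log (2 / δ) / w) :
    (Polynomial.Chebyshev.T ℝ L).eval (1 / Real.sqrt (1 - w ^ 2)) ≥ 1 / δ :=
  chebyshev_growth_bound_general w δ hw hδ L hLge
end

section
/- Bound on the arcosh ratio. For all w ∈ (0,1) and δ ∈ (0,1), arcosh(1/δ) / arcosh(1/√(1−w²)) ≤ ln(2/δ) / w. -/
/-- The inverse hyperbolic cosine, `arcosh(x) = ln(x + √(x²−1))` for `x ≥ 1`. -/
noncomputable def arcosh (x : ℝ) : ℝ := Real.log (x + Real.sqrt (x ^ 2 - 1))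

/-!
The numerator is at most `ln(2/δ)` because `√(x² - 1) ≤ x`. For the denominator,
`cosh w ≤ exp (w² / 2) ≤ 1 / √(1 - w²)`, the second step being `1 - w² ≤ exp (-w²)`;
since `arcosh` is monotone, `w = arcosh (cosh w) ≤ arcosh (1 / √(1 - w²))`.
-/

theorem arcosh_eq_real_arcosh : arcosh = Real.arcosh := rfl

namespace Real

theorem arcosh_le_log_two_mul {x : ℝ} (hx : 0 < x) : arcosh x ≤ log (2 * x) := by
  have hsqrt : √(x ^ 2 - 1) ≤ x := (sqrt_le_left hx.le).2 (by linarith)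
  exact log_le_log (by positivity) (by linarith)

theorem cosh_le_one_div_sqrt_one_sub_sq {x : ℝ} (hx : x ^ 2 < 1) :
    cosh x ≤ 1 / √(1 - x ^ 2) := by
  rw [le_div_iff₀ (sqrt_pos.2 (by linarith))]
  have hsqrt : √(1 - x ^ 2) ≤ exp (-(x ^ 2 / 2)) := by
    rw [sqrt_le_left (exp_pos _).le, ← exp_nat_mul, Nat.cast_ofNat, mul_neg,
      mul_div_cancel₀ _ two_ne_zero]
    linarith [add_one_le_exp (-x ^ 2)]
  calc cosh x * √(1 - x ^ 2) ≤ exp (x ^ 2 / 2) * exp (-(x ^ 2 / 2)) :=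
        mul_le_mul (cosh_le_exp_half_sq x) hsqrt (sqrt_nonneg _) (exp_pos _).le
    _ = 1 := by rw [← exp_add, add_neg_cancel, exp_zero]

theorem abs_le_arcosh_one_div_sqrt_one_sub_sq {x : ℝ} (hx : x ^ 2 < 1) :
    |x| ≤ arcosh (1 / √(1 - x ^ 2)) := by
  have hcosh : cosh |x| ≤ 1 / √(1 - x ^ 2) := cosh_abs x ▸ cosh_le_one_div_sqrt_one_sub_sq hx
  calc |x| = arcosh (cosh |x|) := (arcosh_cosh (abs_nonneg x)).symm
    _ ≤ arcosh (1 / √(1 - x ^ 2)) := (arcosh_le_arcosh (cosh_pos _) (by positivity)).2 hcosh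

end Real

/-- Bound on the arcosh ratio: for all `w, δ ∈ (0,1)`,
`arcosh(1/δ) / arcosh(1/√(1−w²)) ≤ ln(2/δ) / w`. -/
theorem arcosh_ratio_le
    (w δ : ℝ) (hw : w ∈ Set.Ioo (0 : ℝ) 1) (hδ : δ ∈ Set.Ioo (0 : ℝ) 1) :
    arcosh (1 / δ) / arcosh (1 / Real.sqrt (1 - w ^ 2)) ≤ Real.log (2 / δ) / w := by
  obtain ⟨hw0, hw1⟩ := hw
  obtain ⟨hδ0, hδ1⟩ := hδ
  rw [arcosh_eq_real_arcosh]
  have hden : w ≤ Real.arcosh (1 / √(1 - w ^ 2)) :=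
    (le_abs_self w).trans (Real.abs_le_arcosh_one_div_sqrt_one_sub_sq (by nlinarith))
  have hnum : Real.arcosh (1 / δ) ≤ Real.log (2 / δ) := by
    simpa only [mul_one_div] using Real.arcosh_le_log_two_mul (one_div_pos.2 hδ0)
  calc Real.arcosh (1 / δ) / Real.arcosh (1 / √(1 - w ^ 2))
      ≤ Real.arcosh (1 / δ) / w :=
        div_le_div_of_nonneg_left (Real.arcosh_nonneg (one_le_one_div hδ0 hδ1.le)) hw0 hden
    _ ≤ Real.log (2 / δ) / w := by gcongr
end
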